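/- (Newton–Maclaurin inequality) Let $\lambda \in \Gamma_k \subset \mathbb{R}^{n-1}$, i.e., $\sigma_i(\lambda) > 0$ for all $1 \le i \le k$. Then for all $1 \le l \le k \le n-1$, $\left(\frac{\sigma_k(\lambda)}{\binom{n-1}{k}}\right)^{1/k} \le \left(\frac{\sigma_l(\lambda)}{\binom{n-1}{l}}\right)^{1/l}$. -/

import Mathlib

open Finset

/-- The `k`-th elementary symmetric polynomial of `λ = (λ_1, …, λ_{n-1})`. -/
noncomputable def esymmFun {m : ℕ} (k : ℕ) (lam : Fin m → ℝ) : ℝ :=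
  ∑ A ∈ Finset.powersetCard k (Finset.univ : Finset (Fin m)), ∏ j ∈ A, lam j

/-- The `k`-th elementary symmetric polynomial of the variables with `λ_i` omitted,
denoted `σ_k(λ|i)`. -/
noncomputable def esymmFunErase {m : ℕ} (k : ℕ) (lam : Fin m → ℝ) (i : Fin m) : ℝ :=
  ∑ A ∈ Finset.powersetCard k ((Finset.univ : Finset (Fin m)).erase i), ∏ j ∈ A, lam j

/-! The normalized symmetric functions `E j = σ_j(λ) / C(m, j)` are, up to the binomial weights,
the coefficients of `∏ (X + λ_i)`, a polynomial with only real roots. Real-rootedness survives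
differentiation (Rolle) and reversal, so differentiating `m - j - 2` times, reversing and
differentiating `j` more times leaves a real-rooted quadratic proportional to
`E (j + 2) X ^ 2 + 2 E (j + 1) X + E j`; its nonnegative discriminant is Newton's inequality
`E j * E (j + 2) ≤ E (j + 1) ^ 2`. For a positive log-concave sequence with `E 0 = 1` this
gives `E (j + 1) ^ j ≤ E j ^ (j + 1)` by induction, i.e. `E j ^ (1 / j)` is nonincreasing. -/

open scoped Nat
open Polynomial

namespace Polynomial

theorem Splits.reverse {K : Type*} [Field K] {p : K[X]} (hp : p.Splits) : p.reverse.Splits := by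
  induction hp using Submonoid.closure_induction with
  | mem q hq =>
    rcases hq with ⟨a, rfl⟩ | ⟨a, rfl⟩
    · simp
    · exact .of_natDegree_le_one ((reverse_natDegree_le _).trans (natDegree_X_add_C a).le)
  | one => rw [← C_1, reverse_C]; exact .C 1
  | mul p q _ _ hp hq => simpa [reverse_mul_of_domain] using hp.mul hq

theorem splits_derivative {p : ℝ[X]} (hp : p.Splits) : (derivative p).Splits := by
  rw [splits_iff_card_roots] at hp ⊢
  have := p.card_roots_le_derivative
  have := (derivative p).card_roots'
  have := p.natDegree_derivative_le
  omega

theorem splits_iterate_derivative {p : ℝ[X]} (hp : p.Splits) (k : ℕ) :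
    (derivative^[k] p).Splits := by
  induction k with
  | zero => exact hp
  | succ k ih => simpa only [Function.iterate_succ_apply'] using splits_derivative ih

theorem Splits.discrim_nonneg {K : Type*} [Field K] [LinearOrder K] [IsStrictOrderedRing K]
    {p : K[X]} (hp : p.Splits) (h2 : p.natDegree ≤ 2) :
    0 ≤ discrim (p.coeff 2) (p.coeff 1) (p.coeff 0) := by
  by_cases hc : p.coeff 2 = 0
  · simp [discrim, hc, sq_nonneg]
  have hdeg : p.degree ≠ 0 := by
    rw [degree_eq_natDegree (by rintro rfl; simp at hc),
      le_antisymm h2 (le_natDegree_of_ne_zero hc)]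
    decide
  obtain ⟨x, hx⟩ := hp.exists_eval_eq_zero hdeg
  rw [eval_eq_sum_range' (n := 3) (by omega)] at hx
  simp only [Finset.sum_range_succ, Finset.sum_range_zero] at hx
  rw [discrim_eq_sq_of_quadratic_eq_zero (x := x) (by linear_combination hx)]
  exact sq_nonneg _

theorem factorial_mul_coeff_iterate_derivative {R : Type*} [Semiring R] (p : R[X])
    (t k : ℕ) : (t ! : R) * (derivative^[k] p).coeff t = (t + k)! * p.coeff (t + k) := by
  have h := Nat.factorial_mul_descFactorial (Nat.le_add_left k t)
  rw [Nat.add_sub_cancel] at h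
  rw [coeff_iterate_derivative, nsmul_eq_mul, ← mul_assoc, ← Nat.cast_mul, h]

theorem natDegree_iterate_derivative_eq {R : Type*} [Semiring R] [NoZeroDivisors R] [CharZero R]
    (p : R[X]) (k : ℕ) : (derivative^[k] p).natDegree = p.natDegree - k := by
  refine le_antisymm (natDegree_iterate_derivative p k) ?_
  rcases le_or_gt k p.natDegree with hk | hk
  · by_cases hp : p = 0
    · simp [hp]
    refine le_natDegree_of_ne_zero ?_
    rw [coeff_iterate_derivative, Nat.sub_add_cancel hk, nsmul_eq_mul]
    exact mul_ne_zero (Nat.cast_ne_zero.mpr (Nat.descFactorial_eq_zero_iff_lt.not.mpr hk.not_gt))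
      (leadingCoeff_ne_zero.mpr hp)
  · omega

theorem factorial_mul_coeff_iterate_derivative_reverse {R : Type*} [CommSemiring R] {p : R[X]}
    {a b d : ℕ} (hdeg : (derivative^[b] p).natDegree = a + d) {j : ℕ} (hj : j ≤ d) :
    (j ! * (d - j)! : R) * (derivative^[a] (derivative^[b] p).reverse).coeff j =
      (j + a)! * (d - j + b)! * p.coeff (d - j + b) := by
  have hrev : (derivative^[b] p).reverse.coeff (j + a) = (derivative^[b] p).coeff (d - j) := by
    rw [coeff_reverse, hdeg, revAt_le (by omega)]
    congr 1
    omega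
  calc (j ! * (d - j)! : R) * (derivative^[a] (derivative^[b] p).reverse).coeff j
      = (d - j)! * (j ! * (derivative^[a] (derivative^[b] p).reverse).coeff j) := by ring
    _ = (j + a)! * ((d - j)! * (derivative^[b] p).coeff (d - j)) := by
      rw [factorial_mul_coeff_iterate_derivative, hrev]; ring
    _ = _ := by rw [factorial_mul_coeff_iterate_derivative]; ring

theorem Splits.coeff_div_choose_mul_le_sq {p : ℝ[X]} (hp : p.Splits) {b : ℕ}
    (hb : b + 2 ≤ p.natDegree) :
    p.coeff b / p.natDegree.choose b * (p.coeff (b + 2) / p.natDegree.choose (b + 2)) ≤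
      (p.coeff (b + 1) / p.natDegree.choose (b + 1)) ^ 2 := by
  obtain ⟨a, ha⟩ : ∃ a, p.natDegree = b + 2 + a := ⟨p.natDegree - (b + 2), by omega⟩
  set q := derivative^[b] p
  have hq : q.natDegree = a + 2 := by rw [natDegree_iterate_derivative_eq, ha]; omega
  set r := derivative^[a] q.reverse
  have hr_deg : r.natDegree ≤ 2 :=
    (natDegree_iterate_derivative _ _).trans (by have := reverse_natDegree_le q; omega)
  have hdisc :=
    (splits_iterate_derivative (splits_iterate_derivative hp b).reverse a).discrim_nonneg hr_deg
  -- With `n = p.natDegree` and `e i = p.coeff i / n.choose i`, the three identities below say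
  -- `r = n! / 2 * (e b * X ^ 2 + 2 * e (b + 1) * X + e (b + 2))`.
  have hr0 : 2 * r.coeff 0 = a ! * (b + 2)! * p.coeff (b + 2) := by
    simpa [add_comm] using factorial_mul_coeff_iterate_derivative_reverse hq (j := 0) (by norm_num)
  have hr1 : r.coeff 1 = (a + 1)! * (b + 1)! * p.coeff (b + 1) := by
    simpa [add_comm] using factorial_mul_coeff_iterate_derivative_reverse hq (j := 1) (by norm_num)
  have hr2 : 2 * r.coeff 2 = (a + 2)! * b ! * p.coeff b := by
    simpa [add_comm] using factorial_mul_coeff_iterate_derivative_reverse hq (j := 2) (by norm_num)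
  rw [Nat.cast_choose ℝ (by omega), Nat.cast_choose ℝ (by omega),
    Nat.cast_choose ℝ (by omega),
    show p.natDegree - b = a + 2 by omega, show p.natDegree - (b + 1) = a + 1 by omega,
    show p.natDegree - (b + 2) = a by omega]
  calc _ = (2 * r.coeff 2) * (2 * r.coeff 0) / (p.natDegree ! : ℝ) ^ 2 := by
        rw [hr2, hr0]; field_simp
    _ ≤ r.coeff 1 ^ 2 / (p.natDegree ! : ℝ) ^ 2 := by
        gcongr
        rw [discrim] at hdisc
        linarith
    _ = _ := by rw [hr1]; field_simp

end Polynomial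

theorem pow_succ_le_pow_of_logConcave {E : ℕ → ℝ} {k : ℕ} (h0 : E 0 = 1)
    (hpos : ∀ j ≤ k, 0 < E j) (hlc : ∀ j, j + 2 ≤ k → E j * E (j + 2) ≤ E (j + 1) ^ 2) :
    ∀ j, j + 1 ≤ k → E (j + 1) ^ j ≤ E j ^ (j + 1)
  | 0, _ => by simp [h0]
  | j + 1, hj => by
    have ih := pow_succ_le_pow_of_logConcave h0 hpos hlc j (by omega)
    have := hpos j (by omega)
    have := hpos (j + 1) (by omega)
    have := hpos (j + 2) (by omega)
    refine le_of_mul_le_mul_left (a := E (j + 1) ^ j) ?_ (by positivity)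
    calc E (j + 1) ^ j * E (j + 2) ^ (j + 1) ≤ E j ^ (j + 1) * E (j + 2) ^ (j + 1) := by gcongr
      _ = (E j * E (j + 2)) ^ (j + 1) := (mul_pow _ _ _).symm
      _ ≤ (E (j + 1) ^ 2) ^ (j + 1) := by gcongr; exact hlc j (by omega)
      _ = E (j + 1) ^ j * E (j + 1) ^ (j + 1 + 1) := by ring

theorem rpow_inv_succ_le_rpow_inv_of_logConcave {E : ℕ → ℝ} {k : ℕ} (h0 : E 0 = 1)
    (hpos : ∀ j ≤ k, 0 < E j) (hlc : ∀ j, j + 2 ≤ k → E j * E (j + 2) ≤ E (j + 1) ^ 2)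
    {j : ℕ} (hj : 1 ≤ j) (hjk : j + 1 ≤ k) :
    E (j + 1) ^ ((1 : ℝ) / ↑(j + 1)) ≤ E j ^ ((1 : ℝ) / j) := by
  have h₁ := (hpos (j + 1) hjk).le
  have h₀ := (hpos j (by omega)).le
  rw [one_div, one_div]
  refine le_of_pow_le_pow_left₀ (n := (j + 1) * j) (by positivity) (by positivity) ?_
  rw [pow_mul, Real.rpow_inv_natCast_pow h₁ (by omega), mul_comm, pow_mul,
    Real.rpow_inv_natCast_pow h₀ (by omega)]
  exact pow_succ_le_pow_of_logConcave h0 hpos hlc j hjk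

theorem rpow_inv_le_rpow_inv_of_logConcave {E : ℕ → ℝ} {k : ℕ} (h0 : E 0 = 1)
    (hpos : ∀ j ≤ k, 0 < E j) (hlc : ∀ j, j + 2 ≤ k → E j * E (j + 2) ≤ E (j + 1) ^ 2)
    {l : ℕ} (hl : 1 ≤ l) (hlk : l ≤ k) :
    E k ^ ((1 : ℝ) / k) ≤ E l ^ ((1 : ℝ) / l) := by
  suffices ∀ i, l ≤ i → i ≤ k → E i ^ ((1 : ℝ) / i) ≤ E l ^ ((1 : ℝ) / l) from
    this k hlk le_rfl
  intro i hli
  induction i, hli using Nat.le_induction with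
  | base => exact fun _ ↦ le_rfl
  | succ i hli ih =>
    exact fun hik ↦ (rpow_inv_succ_le_rpow_inv_of_logConcave h0 hpos hlc (by omega) hik).trans
      (ih (by omega))

theorem esymmFun_zero {m : ℕ} (lam : Fin m → ℝ) : esymmFun 0 lam = 1 := by
  simp [esymmFun]

theorem coeff_prod_X_add_C_eq_esymmFun {m : ℕ} (lam : Fin m → ℝ) {t : ℕ} (ht : t ≤ m) :
    (∏ i, (X + C (lam i))).coeff t = esymmFun (m - t) lam := by
  rw [Finset.prod_X_add_C_coeff univ lam (by simpa using ht)]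
  simp [esymmFun]

theorem esymmFun_div_choose_mul_le_sq {m : ℕ} (lam : Fin m → ℝ) {j : ℕ} (hj : j + 2 ≤ m) :
    esymmFun j lam / m.choose j * (esymmFun (j + 2) lam / m.choose (j + 2)) ≤
      (esymmFun (j + 1) lam / m.choose (j + 1)) ^ 2 := by
  have hdeg : (∏ i, (X + C (lam i))).natDegree = m := by
    rw [natDegree_prod_of_monic _ _ fun i _ ↦ monic_X_add_C (lam i)]
    simp
  have h := (Splits.prod (s := univ) fun i _ ↦ Splits.X_add_C (lam i)).coeff_div_choose_mul_le_sq
    (b := m - (j + 2)) (by omega)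
  rw [hdeg, coeff_prod_X_add_C_eq_esymmFun lam (by omega),
    coeff_prod_X_add_C_eq_esymmFun lam (by omega), coeff_prod_X_add_C_eq_esymmFun lam (by omega),
    show m - (m - (j + 2)) = j + 2 by omega, show m - (m - (j + 2) + 1) = j + 1 by omega,
    show m - (m - (j + 2) + 2) = j by omega, show m - (j + 2) + 1 = m - (j + 1) by omega,
    show m - (j + 2) + 2 = m - j by omega, Nat.choose_symm (by omega),
    Nat.choose_symm (by omega), Nat.choose_symm (by omega)] at h
  linarith

theorem newton_maclaurin {n : ℕ} (k l : ℕ) (hl : 1 ≤ l) (hlk : l ≤ k) (hk : k ≤ n - 1)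
    (lam : Fin (n - 1) → ℝ)
    (hGamma : ∀ i : ℕ, 1 ≤ i → i ≤ k → 0 < esymmFun i lam) :
    (esymmFun k lam / ((n - 1).choose k : ℝ)) ^ ((1 : ℝ) / k) ≤
      (esymmFun l lam / ((n - 1).choose l : ℝ)) ^ ((1 : ℝ) / l) := by
  refine rpow_inv_le_rpow_inv_of_logConcave (E := fun j ↦ esymmFun j lam / (n - 1).choose j)
    (by simp [esymmFun_zero]) (fun j hj ↦ ?_)
    (fun j hj ↦ esymmFun_div_choose_mul_le_sq lam (by omega)) hl hlk
  rcases Nat.eq_zero_or_pos j with rfl | hj₀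
  · simp [esymmFun_zero]
  · exact div_pos (hGamma j hj₀ hj) (mod_cast Nat.choose_pos (hj.trans hk))
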